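/- The q-binomial theorem: for |q|<1, |z|<1 and any complex a, one has ∑_{n=0}^∞ (a;q)_n/(q;q)_n · z^n = (a z; q)_∞ / (z; q)_∞. -/

import Mathlib

/-- The infinite q-Pochhammer symbol `(a;q)_∞ = ∏_{j≥0} (1 - a q^j)`. -/
noncomputable def qp (a q : ℂ) : ℂ := ∏' j : ℕ, (1 - a * q ^ j)

/-- The finite q-Pochhammer symbol `(a;q)_n = ∏_{j=0}^{n-1} (1 - a q^j)`. -/
noncomputable def qpf (a q : ℂ) (n : ℕ) : ℂ := ∏ j ∈ Finset.range n, (1 - a * q ^ j)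

/-!
Write `f(w) = ∑ₙ cₙ wⁿ` with `cₙ = (a;q)ₙ/(q;q)ₙ`. The recurrence
`cₙ₊₁ (1 - qⁿ⁺¹) = cₙ (1 - a qⁿ)` says exactly that `(1 - w) f(w) = (1 - a w) f(q w)`. Iterating,
`(z;q)_N f(z) = (az;q)_N f(q^N z)`, and letting `N → ∞` gives `(z;q)_∞ f(z) = (az;q)_∞ f(0)`
with `f(0) = 1`.
-/

open Filter Topology Metric

lemma qpf_succ (a q : ℂ) (n : ℕ) : qpf a q (n + 1) = qpf a q n * (1 - a * q ^ n) :=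
  Finset.prod_range_succ _ _

section Pochhammer

variable {q : ℂ}

lemma one_sub_mul_pow_ne_zero {x : ℂ} (hx : ‖x‖ < 1) (hq : ‖q‖ ≤ 1) (j : ℕ) :
    1 - x * q ^ j ≠ 0 := by
  refine sub_ne_zero.mpr fun h => ?_
  have : ‖x * q ^ j‖ < 1 := by
    rw [norm_mul, norm_pow]
    exact mul_lt_one_of_nonneg_of_lt_one_left (norm_nonneg x) hx (pow_le_one₀ (norm_nonneg q) hq)
  simp [← h] at this

lemma summable_norm_neg_mul_pow (x : ℂ) (hq : ‖q‖ < 1) :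
    Summable fun j : ℕ => ‖-(x * q ^ j)‖ := by
  simpa [norm_mul, norm_pow] using
    (summable_geometric_of_lt_one (norm_nonneg q) hq).mul_left ‖x‖

lemma tendsto_qpf_qp (x : ℂ) (hq : ‖q‖ < 1) :
    Tendsto (qpf x q) atTop (𝓝 (qp x q)) := by
  have : Multipliable fun j : ℕ => 1 - x * q ^ j := by
    simpa [sub_eq_add_neg] using multipliable_one_add_of_summable (summable_norm_neg_mul_pow x hq)
  exact this.hasProd.tendsto_prod_nat

lemma qp_ne_zero {x : ℂ} (hx : ‖x‖ < 1) (hq : ‖q‖ < 1) : qp x q ≠ 0 := by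
  simpa [qp, sub_eq_add_neg] using tprod_one_add_ne_zero_of_summable
    (by simpa [← sub_eq_add_neg] using one_sub_mul_pow_ne_zero hx hq.le)
    (summable_norm_neg_mul_pow x hq)

end Pochhammer

noncomputable def qBinomCoeff (a q : ℂ) (n : ℕ) : ℂ := qpf a q n / qpf q q n

noncomputable def qBinomSeries (a q w : ℂ) : ℂ := ∑' n, qBinomCoeff a q n * w ^ n

section QBinomSeries

variable {a q : ℂ}

lemma qBinomCoeff_zero : qBinomCoeff a q 0 = 1 := by
  simp [qBinomCoeff, qpf]

lemma qBinomCoeff_succ_mul (hq : ‖q‖ < 1) (n : ℕ) :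
    qBinomCoeff a q (n + 1) * (1 - q ^ (n + 1)) = qBinomCoeff a q n * (1 - a * q ^ n) := by
  have h := one_sub_mul_pow_ne_zero hq hq.le n
  rw [pow_succ', qBinomCoeff, qBinomCoeff, qpf_succ, qpf_succ, ← div_div, div_mul_cancel₀ _ h]
  ring

lemma exists_norm_qBinomCoeff_le (hq : ‖q‖ < 1) : ∃ M, ∀ n, ‖qBinomCoeff a q n‖ ≤ M := by
  have hlim : Tendsto (fun n => ‖qBinomCoeff a q n‖) atTop (𝓝 ‖qp a q / qp q q‖) :=
    ((tendsto_qpf_qp a hq).div (tendsto_qpf_qp q hq) (qp_ne_zero hq hq)).norm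
  obtain ⟨M, hM⟩ := hlim.bddAbove_range
  exact ⟨M, fun n => hM ⟨n, rfl⟩⟩

lemma summable_qBinomCoeff_mul_pow (hq : ‖q‖ < 1) {w : ℂ} (hw : ‖w‖ < 1) :
    Summable fun n => qBinomCoeff a q n * w ^ n := by
  obtain ⟨M, hM⟩ := exists_norm_qBinomCoeff_le (a := a) hq
  refine .of_norm_bounded ((summable_geometric_of_lt_one (norm_nonneg w) hw).mul_left M) fun n => ?_
  rw [norm_mul, norm_pow]
  exact mul_le_mul_of_nonneg_right (hM n) (by positivity)

lemma qBinomSeries_zero : qBinomSeries a q 0 = 1 := by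
  rw [qBinomSeries, tsum_eq_single 0 fun n hn => by simp [hn]]
  simp [qBinomCoeff_zero]

lemma continuousAt_qBinomSeries_zero (hq : ‖q‖ < 1) : ContinuousAt (qBinomSeries a q) 0 := by
  obtain ⟨M, hM⟩ := exists_norm_qBinomCoeff_le (a := a) hq
  have hcont : ContinuousOn (qBinomSeries a q) (closedBall 0 (1 / 2)) := by
    refine continuousOn_tsum (fun n => by fun_prop)
      ((summable_geometric_two).mul_left M) fun n w hw => ?_
    rw [mem_closedBall, dist_zero_right] at hw
    rw [norm_mul, norm_pow]
    exact mul_le_mul (hM n) (pow_le_pow_left₀ (norm_nonneg w) hw n) (by positivity)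
      ((norm_nonneg _).trans (hM n))
  exact hcont.continuousAt (closedBall_mem_nhds 0 (by norm_num))

lemma one_sub_mul_qBinomSeries (hq : ‖q‖ < 1) {w : ℂ} (hw : ‖w‖ < 1) :
    (1 - w) * qBinomSeries a q w = (1 - a * w) * qBinomSeries a q (q * w) := by
  have hqw : ‖q * w‖ < 1 := by
    rw [norm_mul]
    exact mul_lt_one_of_nonneg_of_lt_one_left (norm_nonneg q) hq hw.le
  have h₁ : HasSum (fun n => qBinomCoeff a q n * w ^ n) (qBinomSeries a q w) :=
    (summable_qBinomCoeff_mul_pow hq hw).hasSum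
  have h₂ : HasSum (fun n => qBinomCoeff a q n * (q * w) ^ n) (qBinomSeries a q (q * w)) :=
    (summable_qBinomCoeff_mul_pow hq hqw).hasSum
  have hdiff := (hasSum_nat_add_iff' 1).mpr (h₁.sub h₂)
  have hshift := (h₁.mul_left w).sub (h₂.mul_left (a * w))
  simp only [Finset.sum_range_one, pow_zero, sub_self, sub_zero] at hdiff
  have hterm : ∀ n : ℕ,
      qBinomCoeff a q (n + 1) * w ^ (n + 1) - qBinomCoeff a q (n + 1) * (q * w) ^ (n + 1) =
        w * (qBinomCoeff a q n * w ^ n) - a * w * (qBinomCoeff a q n * (q * w) ^ n) := fun n => by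
    linear_combination w ^ (n + 1) * qBinomCoeff_succ_mul (a := a) hq n
  simp only [hterm] at hdiff
  linear_combination hdiff.unique hshift

lemma qpf_mul_qBinomSeries (hq : ‖q‖ < 1) {z : ℂ} (hz : ‖z‖ < 1) (N : ℕ) :
    qpf z q N * qBinomSeries a q z = qpf (a * z) q N * qBinomSeries a q (q ^ N * z) := by
  induction N with
  | zero => simp [qpf]
  | succ N ih =>
    have hqNz : ‖q ^ N * z‖ < 1 := by
      rw [norm_mul, norm_pow]
      exact mul_lt_one_of_nonneg_of_lt_one_right (pow_le_one₀ (norm_nonneg q) hq.le)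
        (norm_nonneg z) hz
    have hfe := one_sub_mul_qBinomSeries (a := a) hq hqNz
    rw [show q * (q ^ N * z) = q ^ (N + 1) * z by ring] at hfe
    rw [qpf_succ, qpf_succ]
    linear_combination (1 - z * q ^ N) * ih + qpf (a * z) q N * hfe

end QBinomSeries

/-- The q-binomial theorem: for `|q| < 1` and `|z| < 1`,
`∑_{n≥0} (a;q)_n/(q;q)_n z^n = (az;q)_∞/(z;q)_∞`. -/
theorem q_binomial (q a z : ℂ) (hq : ‖q‖ < 1) (hz : ‖z‖ < 1) :
    (∑' n : ℕ, qpf a q n / qpf q q n * z ^ n) = qp (a * z) q / qp z q := by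
  change qBinomSeries a q z = _
  have hlim : Tendsto (fun N => qBinomSeries a q (q ^ N * z)) atTop (𝓝 1) := by
    rw [← qBinomSeries_zero (a := a) (q := q)]
    refine (continuousAt_qBinomSeries_zero hq).tendsto.comp ?_
    simpa using (tendsto_pow_atTop_nhds_zero_of_norm_lt_one hq).mul_const z
  have heq : qp z q * qBinomSeries a q z = qp (a * z) q * 1 :=
    tendsto_nhds_unique ((tendsto_qpf_qp z hq).mul_const _)
      (((tendsto_qpf_qp (a * z) hq).mul hlim).congr fun N => (qpf_mul_qBinomSeries hq hz N).symm)
  rw [eq_div_iff (qp_ne_zero hz hq)]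
  linear_combination heq
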